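/- arXiv:2302.03643 — 4 statements merged into one kernel-verified Lean document; each statement's English description precedes it below -/
import Mathlib

section
/- For w ∈ S_n, the following are equivalent: (1) w is an inverse fireworks permutation; (2) the rightmost cells of the nonempty rows of RD(w) lie in pairwise distinct columns. -/
open scoped Classical

noncomputable section

/-- A weak composition: a finitely supported sequence of naturals.  Indices are
thought of as positive integers; index `0` is required to satisfy `α 0 = 0`. -/
abbrev WeakComp := ℕ →₀ ℕ

/-- A weak composition is snowy if its positive entries are pairwise distinct. -/
def Snowy (α : WeakComp) : Prop :=
  ∀ r r', 0 < α r → α r = α r' → r = r'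

/-- The key diagram of a weak composition: the left-justified diagram with
`α r` cells in row `r` (columns `1, …, α r`). -/
def keyDiagram (α : WeakComp) : Finset (ℕ × ℕ) :=
  α.support.biUnion fun r => (Finset.Icc 1 (α r)).image fun c => (r, c)

/-- Largest row index occurring in a diagram. -/
def rowBound (D : Finset (ℕ × ℕ)) : ℕ := (D.image Prod.fst).sup id

/-- One step of the snow-diagram algorithm: in row `r`, mark as a dark cloud the
rightmost cell of `D` whose column contains no dark cloud of `S` yet. -/
def darkStep (D S : Finset (ℕ × ℕ)) (r : ℕ) : Finset (ℕ × ℕ) :=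
  let cols := (D.filter fun p => p.1 = r ∧ ∀ q ∈ S, q.2 ≠ p.2).image Prod.snd
  if h : cols.Nonempty then insert (r, cols.max' h) S else S

/-- Process rows `N, N-1, …, N-k+1` from bottom to top. -/
def darkAux (D : Finset (ℕ × ℕ)) (N : ℕ) : ℕ → Finset (ℕ × ℕ)
  | 0 => ∅
  | k + 1 => darkStep D (darkAux D N k) (N - k)

/-- The dark cloud diagram of a diagram `D`: iterate the rows of `D` from bottom
to top, marking in each row the rightmost cell whose column contains no dark
cloud from a lower row. -/
def dark (D : Finset (ℕ × ℕ)) : Finset (ℕ × ℕ) := darkAux D (rowBound D) (rowBound D)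

/-- The underlying diagram of the snow diagram of `D`: the cells of `D` together
with all (snowflake) positions above a dark cloud in its column. -/
def snow (D : Finset (ℕ × ℕ)) : Finset (ℕ × ℕ) :=
  D ∪ (dark D).biUnion fun p => (Finset.Icc 1 p.1).image fun r => (r, p.2)

/-- `rajcode` of a diagram: the number of cells in row `r` of its snow diagram. -/
def rajcodeD (D : Finset (ℕ × ℕ)) (r : ℕ) : ℕ :=
  ((snow D).filter fun p => p.1 = r).card

/-- `raj` of a diagram: the total number of cells of its snow diagram. -/
def rajD (D : Finset (ℕ × ℕ)) : ℕ := (snow D).card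

/-- `rajcode` of a weak composition. -/
def rajcode (α : WeakComp) (r : ℕ) : ℕ := rajcodeD (keyDiagram α) r

/-- `raj` of a weak composition. -/
def raj (α : WeakComp) : ℕ := rajD (keyDiagram α)

/-- Non-attacking rook diagram: a finite subset of `ℤ_{>0} × ℤ_{>0}` with at
most one cell in each row and at most one cell in each column. -/
def IsRook (R : Finset (ℕ × ℕ)) : Prop :=
  (∀ p ∈ R, 1 ≤ p.1 ∧ 1 ≤ p.2) ∧
    ∀ p ∈ R, ∀ q ∈ R, (p.1 = q.1 ∨ p.2 = q.2) → p = q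

/-- The sum `|α|` of the entries of a weak composition. -/
def wsum (α : WeakComp) : ℕ := α.sum fun _ v => v

/-- The number of pairs `(r, r')` with `1 ≤ r < r'` and `α r < α r'`. -/
def invCount (α : WeakComp) : ℕ :=
  ((Finset.Icc 1 (α.support.sup id) ×ˢ α.support).filter fun p =>
      p.1 < p.2 ∧ α p.1 < α p.2).card

/-- Swap entries `i` and `i+1` of a weak composition. -/
def swapEntries (i : ℕ) (α : WeakComp) : WeakComp :=
  Finsupp.equivMapDomain (Equiv.swap i (i + 1)) α

/-- The Rothe diagram of `w ∈ S_n`, in 1-based coordinates: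
`{(r, w(r')) : r < r', w(r) > w(r')}`. -/
def rothe {n : ℕ} (w : Equiv.Perm (Fin n)) : Finset (ℕ × ℕ) :=
  (Finset.univ.filter fun p : Fin n × Fin n => p.1 < p.2 ∧ w p.2 < w p.1).image
    fun p => ((p.1 : ℕ) + 1, (w p.2 : ℕ) + 1)

/-- Length of the longest increasing subsequence of `w` starting at position `r`
(equivalently, starting with the value `w r`). -/
def LISfrom {n : ℕ} (w : Equiv.Perm (Fin n)) (r : Fin n) : ℕ :=
  Finset.sup (Finset.univ.filter fun s : Finset (Fin n) =>
      r ∈ s ∧ (∀ i ∈ s, r ≤ i) ∧ ∀ i ∈ s, ∀ j ∈ s, i < j → w i < w j)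
    Finset.card

/-- Insert `x` into a strictly decreasing row: replace the largest entry `< x`
(returning it as bumped), or append `x` at the end. -/
def insertRow : List ℕ → ℕ → List ℕ × Option ℕ
  | [], x => ([x], none)
  | a :: t, x =>
      if a < x then (x :: t, some a)
      else (a :: (insertRow t x).1, (insertRow t x).2)

/-- The 1-based value of `w` at 0-based position `i` (0 if out of range). -/
def oneline {n : ℕ} (w : Equiv.Perm (Fin n)) (i : ℕ) : ℕ :=
  if h : i < n then (w ⟨i, h⟩ : ℕ) + 1 else 0

/-- Row one of the Schensted insertion tableau after the first `k` insertions of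
the values `w(n), w(n-1), …` (1-based values, inserted from the last position). -/
def rowOneAux {n : ℕ} (w : Equiv.Perm (Fin n)) : ℕ → List ℕ
  | 0 => []
  | k + 1 => (insertRow (rowOneAux w k) (oneline w (n - 1 - k))).1

/-- The value bumped from row one when the value `w r` is inserted (during the
Schensted insertion of `w(n), …, w(1)` into the empty tableau); `none` if `w r`
is appended at the end of row one. -/
def bumpedFromRowOne {n : ℕ} (w : Equiv.Perm (Fin n)) (r : Fin n) : Option ℕ :=
  (insertRow (rowOneAux w (n - 1 - (r : ℕ))) (oneline w (r : ℕ))).2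

/-- Position `i` starts a maximal decreasing run of `u` (in one-line notation). -/
def IsRunStart {n : ℕ} (u : Equiv.Perm (Fin n)) (i : Fin n) : Prop :=
  ∀ j : Fin n, (j : ℕ) + 1 = (i : ℕ) → u j < u i

/-- A fireworks permutation: the initial elements of its maximal decreasing runs
are increasing. -/
def Fireworks {n : ℕ} (u : Equiv.Perm (Fin n)) : Prop :=
  ∀ i j : Fin n, IsRunStart u i → IsRunStart u j → i < j → u i < u j

/-- An inverse fireworks permutation. -/
def InverseFireworks {n : ℕ} (w : Equiv.Perm (Fin n)) : Prop := Fireworks w⁻¹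

/-- The `n`-th Bell number: the number of set partitions (equivalence relations)
of an `n`-element set. -/
def bell (n : ℕ) : ℕ := Nat.card (Setoid (Fin n))

/-- The staircase board `Stair_n = {(r,c) : 1 ≤ r ≤ n-1, 1 ≤ c ≤ n-r}`. -/
def stair (n : ℕ) : Finset (ℕ × ℕ) :=
  (Finset.Icc 1 n ×ˢ Finset.Icc 1 n).filter fun p => p.1 ≤ n - 1 ∧ p.2 ≤ n - p.1

/-- All cells weakly above a rook of `R` in its column, or weakly to the left of
a rook of `R` in its row. -/
def hooks (R : Finset (ℕ × ℕ)) : Finset (ℕ × ℕ) :=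
  R.biUnion fun p =>
    ((Finset.Icc 1 p.1).image fun r => (r, p.2)) ∪
      ((Finset.Icc 1 p.2).image fun c => (p.1, c))

/-- The Northwest number `NW(R)`. -/
def NW (R : Finset (ℕ × ℕ)) : ℕ := (hooks R).card

/-- The Garsia–Remmel statistic: the number of cells of `Stair_n` that are not
weakly above a rook in its column and not weakly to the left of a rook in its
row. -/
def GRcount (n : ℕ) (R : Finset (ℕ × ℕ)) : ℕ :=
  ((stair n).filter fun q =>
      ¬ ∃ p ∈ R, (p.2 = q.2 ∧ q.1 ≤ p.1) ∨ (p.1 = q.1 ∧ q.2 ≤ p.2)).card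

/-- Garsia–Remmel `q`-Stirling numbers of the second kind. -/
def qStirling : ℕ → ℕ → Polynomial ℤ
  | 0, 0 => 1
  | 0, _ + 1 => 0
  | _ + 1, 0 => 0
  | n + 1, k + 1 =>
      Polynomial.X ^ k * qStirling n k +
        (∑ i ∈ Finset.range (k + 1), Polynomial.X ^ i) * qStirling n (k + 1)

/-- The `q`-Bell polynomial `B_n(q) = Σ_{k=0}^n S_{n,k}(q)`. -/
def qBell (n : ℕ) : Polynomial ℤ := ∑ k ∈ Finset.range (n + 1), qStirling n k

/-- Tail lexicographic order on exponent vectors: `γ < α` iff there is `k` with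
`γ k < α k` and `γ j = α j` for all `j > k`. -/
def TailLt (γ α : ℕ →₀ ℕ) : Prop :=
  ∃ k, γ k < α k ∧ ∀ j, k < j → γ j = α j


/-
In `w⁻¹`, a value `b` starts a decreasing run exactly when `b - 1` lies to the left of `b` in `w`, and
`w⁻¹` is fireworks exactly when every run start is a left-to-right maximum. So `w` is inverse
fireworks iff, whenever some smaller value lies to the right of `w(r)`, so does `w(r) - 1`; that is,
iff the rightmost cell of every nonempty row `r` of `RD(w)` is `(r, w(r) - 1)`, and these lie in
distinct columns. Conversely, if the rightmost cell of row `r` is `(r, c)` with `c < w(r) - 1`, the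
value `c + 1` must lie to the left of position `r`, and its row also has its rightmost cell in
column `c`.
-/

def IsRightmostCell (D : Finset (ℕ × ℕ)) (r c : ℕ) : Prop :=
  (r, c) ∈ D ∧ ∀ c₂, (r, c₂) ∈ D → c₂ ≤ c

section Fireworks

variable {n : ℕ} (u : Equiv.Perm (Fin n))

lemma exists_isRunStart_le (z : Fin n) : ∃ s ≤ z, IsRunStart u s ∧ u z ≤ u s := by
  induction z using WellFoundedLT.induction with
  | ind z ih =>
    by_cases hz : IsRunStart u z
    · exact ⟨z, le_rfl, hz, le_rfl⟩
    · obtain ⟨j, hjz, hj⟩ : ∃ j : Fin n, (j : ℕ) + 1 = z ∧ u z ≤ u j := by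
        simpa [IsRunStart] using hz
      obtain ⟨s, hsj, hs, hus⟩ := ih j (Fin.lt_def.mpr (by omega))
      exact ⟨s, hsj.trans (Fin.le_def.mpr (by omega)), hs, hj.trans hus⟩

lemma fireworks_iff_isRunStart_imp_lt :
    Fireworks u ↔ ∀ i j, i < j → IsRunStart u j → u i < u j := by
  refine ⟨fun h i j hij hj => ?_, fun h i j _ hj hij => h i j hij hj⟩
  obtain ⟨s, hsi, hs, hus⟩ := exists_isRunStart_le u i
  exact hus.trans_lt (h s j hs hj (hsi.trans_lt hij))

end Fireworks

section Rothe

variable {n : ℕ} (w : Equiv.Perm (Fin n))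

lemma inverseFireworks_iff_exists_pred_right :
    InverseFireworks w ↔
      ∀ i j, i < j → w j < w i → ∃ k, i < k ∧ (w k : ℕ) + 1 = w i := by
  rw [InverseFireworks, fireworks_iff_isRunStart_imp_lt]
  constructor
  · intro h i j hij hji
    by_contra! hk
    have hstart : IsRunStart w⁻¹ (w i) := by
      intro a ha
      obtain ⟨k, rfl⟩ := w.surjective a
      simp only [Equiv.Perm.coe_inv, Equiv.symm_apply_apply]
      rcases lt_trichotomy k i with hki | rfl | hik
      · exact hki
      · omega
      · exact absurd ha (hk k hik)
    have := h (w j) (w i) hji hstart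
    simp only [Equiv.Perm.coe_inv, Equiv.symm_apply_apply] at this
    exact absurd hij this.not_gt
  · intro h a b hab hb
    obtain ⟨i, rfl⟩ := w.surjective b
    obtain ⟨j, rfl⟩ := w.surjective a
    simp only [Equiv.Perm.coe_inv, Equiv.symm_apply_apply] at hb ⊢
    by_contra! hij
    have hij : i < j := hij.lt_of_ne (by rintro rfl; exact hab.false)
    obtain ⟨k, hik, hk⟩ := h i j hij hab
    have := hb (w k) hk
    simp only [Equiv.Perm.coe_inv, Equiv.symm_apply_apply] at this
    exact absurd hik this.not_gt

lemma mem_rothe_iff {r c : ℕ} :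
    (r, c) ∈ rothe w ↔
      ∃ i j : Fin n, i < j ∧ w j < w i ∧ r = (i : ℕ) + 1 ∧ c = (w j : ℕ) + 1 := by
  simp only [rothe, Finset.mem_image, Finset.mem_filter, Finset.mem_univ, true_and,
    Prod.exists, Prod.mk.injEq]
  grind

lemma succ_mem_rothe_iff (i : Fin n) {c : ℕ} :
    ((i : ℕ) + 1, c) ∈ rothe w ↔ ∃ j, i < j ∧ w j < w i ∧ c = (w j : ℕ) + 1 := by
  rw [mem_rothe_iff]
  constructor
  · rintro ⟨i', j, hij, hw, hi, rfl⟩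
    obtain rfl : i' = i := Fin.ext (by omega)
    exact ⟨j, hij, hw, rfl⟩
  · rintro ⟨j, hij, hw, rfl⟩
    exact ⟨i, j, hij, hw, rfl, rfl⟩

lemma le_of_succ_mem_rothe {i : Fin n} {c : ℕ} (h : ((i : ℕ) + 1, c) ∈ rothe w) :
    c ≤ w i := by
  obtain ⟨j, -, hj, rfl⟩ := (succ_mem_rothe_iff w i).mp h
  exact hj

lemma isRightmostCell_rothe_of_succ_eq {i k : Fin n} (hik : i < k) (hk : (w k : ℕ) + 1 = w i) :
    IsRightmostCell (rothe w) ((i : ℕ) + 1) (w i) := by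
  refine ⟨?_, fun c hc => le_of_succ_mem_rothe w hc⟩
  rw [← hk, succ_mem_rothe_iff]
  exact ⟨k, hik, Fin.lt_def.mpr (by omega), rfl⟩

lemma exists_isRightmostCell_rothe {i j : Fin n} (hij : i < j) (hji : w j < w i) :
    ∃ p, i < p ∧ w p < w i ∧ IsRightmostCell (rothe w) ((i : ℕ) + 1) ((w p : ℕ) + 1) := by
  obtain ⟨p, hp, hmax⟩ := (Finset.univ.filter fun q => i < q ∧ w q < w i).exists_max_image w
    ⟨j, by simp [hij, hji]⟩
  simp only [Finset.mem_filter, Finset.mem_univ, true_and] at hp hmax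
  refine ⟨p, hp.1, hp.2, (succ_mem_rothe_iff w i).mpr ⟨p, hp.1, hp.2, rfl⟩, fun c hc => ?_⟩
  obtain ⟨q, hiq, hq, rfl⟩ := (succ_mem_rothe_iff w i).mp hc
  have := Fin.le_def.mp (hmax q ⟨hiq, hq⟩)
  omega

lemma IsRightmostCell.eq_of_exists_pred_right
    (h : ∀ i j, i < j → w j < w i → ∃ k, i < k ∧ (w k : ℕ) + 1 = w i) {r c : ℕ}
    (hrc : IsRightmostCell (rothe w) r c) : ∃ i : Fin n, r = (i : ℕ) + 1 ∧ c = w i := by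
  obtain ⟨i, j, hij, hji, rfl, rfl⟩ := (mem_rothe_iff w).mp hrc.1
  obtain ⟨k, hik, hk⟩ := h i j hij hji
  refine ⟨i, rfl, le_antisymm (le_of_succ_mem_rothe w hrc.1) ?_⟩
  exact hrc.2 _ (isRightmostCell_rothe_of_succ_eq w hik hk).1

lemma IsRightmostCell.exists_lt_of_succ_lt {i p : Fin n} (hip : i < p)
    (hrc : IsRightmostCell (rothe w) ((i : ℕ) + 1) ((w p : ℕ) + 1)) (hlt : (w p : ℕ) + 1 < w i) :
    ∃ q < i, IsRightmostCell (rothe w) ((q : ℕ) + 1) ((w p : ℕ) + 1) := by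
  obtain ⟨q, hq⟩ := w.surjective ⟨(w p : ℕ) + 1, by omega⟩
  have hqv : (w q : ℕ) = (w p : ℕ) + 1 := by rw [hq]
  have hqi : q < i := by
    rcases lt_trichotomy q i with hqi | rfl | hiq
    · exact hqi
    · omega
    · have := hrc.2 _ ((succ_mem_rothe_iff w i).mpr ⟨q, hiq, Fin.lt_def.mpr (by omega), rfl⟩)
      omega
  refine ⟨q, hqi, ?_⟩
  rw [← hqv]
  exact isRightmostCell_rothe_of_succ_eq w (hqi.trans hip) hqv.symm

end Rothe

/-- `w` is inverse fireworks iff the rightmost cells of the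
nonempty rows of `RD(w)` lie in pairwise distinct columns. -/
theorem inverseFireworks_iff_rightmost_distinct (n : ℕ) (w : Equiv.Perm (Fin n)) :
    InverseFireworks w ↔
      ∀ r r' c c' : ℕ,
        ((r, c) ∈ rothe w ∧ ∀ c₂, (r, c₂) ∈ rothe w → c₂ ≤ c) →
        ((r', c') ∈ rothe w ∧ ∀ c₂, (r', c₂) ∈ rothe w → c₂ ≤ c') →
        c = c' → r = r' := by
  rw [inverseFireworks_iff_exists_pred_right]
  constructor
  · intro h r r' c c' hrc hrc' hcc
    obtain ⟨i, rfl, rfl⟩ := IsRightmostCell.eq_of_exists_pred_right w h hrc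
    obtain ⟨i', rfl, rfl⟩ := IsRightmostCell.eq_of_exists_pred_right w h hrc'
    rw [w.injective (Fin.ext hcc)]
  · intro h i j hij hji
    obtain ⟨p, hip, hpi, hrc⟩ := exists_isRightmostCell_rothe w hij hji
    rcases (Nat.succ_le_of_lt hpi).lt_or_eq with hlt | heq
    · obtain ⟨q, hqi, hrc'⟩ := hrc.exists_lt_of_succ_lt w hip hlt
      have := h _ _ _ _ hrc' hrc rfl
      omega
    · exact ⟨p, hip, heq⟩

end
end

section
/- Define the generating function F(q) = Σ_{α snowy} q^{raj(α)} summed over all snowy weak compositions, where raj(α) = |α| + |{(r,r') : r < r', α_r < α_{r'}}|. Then F(q), as a formal power series, equals the infinite product ∏_{m ≥ 1} (1 + q^m/(1−q)). More precisely, for every M ≥ 0, Σ over snowy weak compositions with all entries at most M of q^{raj(α)} equals ∏_{m=1}^{M} (1 + q^m/(1−q)) as formal power series in q. -/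
open scoped Classical

noncomputable section

/-! Grouping snowy compositions with entries `≤ M + 1` by whether the value `M + 1` occurs gives
`F_{M+1} = F_M (1 + q^{M+1}/(1-q))`. If it occurs, it occurs once, say at position `k + 1`, and
erasing it is a bijection onto pairs `(β, k)` with `β` snowy with entries `≤ M`. As the largest
entry, `M + 1` adds `M + 1` to `|α|` and exactly `k` inversions: one with every earlier position,
zeros included, and none with later ones. -/

open Finset PowerSeries

section WeightGenFun

variable {A B : Type*}

-- `Nat.card` is `0` on infinite types, so the algebra of these series needs finite fibres.
def weightGenFun (w : A → ℕ) : PowerSeries ℤ :=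
  PowerSeries.mk fun d => (Nat.card {a // w a = d} : ℤ)

theorem weightGenFun_congr (e : A ≃ B) {wa : A → ℕ} {wb : B → ℕ} (h : ∀ a, wb (e a) = wa a) :
    weightGenFun wb = weightGenFun wa := by
  ext d
  simp only [weightGenFun, coeff_mk]
  exact congrArg _ (Nat.card_congr (e.subtypeEquiv fun a => by rw [h])).symm

theorem finite_fiber_congr (e : A ≃ B) {wa : A → ℕ} {wb : B → ℕ} (h : ∀ a, wb (e a) = wa a)
    (ha : ∀ d, Finite {a // wa a = d}) (d : ℕ) : Finite {b // wb b = d} :=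
  Finite.of_equiv _ (e.subtypeEquiv fun a => by rw [h])

theorem weightGenFun_of_unique [Unique A] (w : A → ℕ) : weightGenFun w = X ^ w default := by
  ext d
  rw [weightGenFun, coeff_mk, coeff_X_pow]
  split_ifs with hd
  · have : Unique {a // w a = d} :=
      ⟨⟨default, by rw [hd]⟩, fun a => Subtype.ext (Unique.eq_default _)⟩
    simp
  · have : IsEmpty {a // w a = d} := ⟨fun a => hd (by rw [← a.2, Unique.eq_default a.1])⟩
    simp

section Sum

variable (wa : A → ℕ) (wb : B → ℕ)

def fiberSumElimEquiv (d : ℕ) :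
    {x // Sum.elim wa wb x = d} ≃ {a // wa a = d} ⊕ {b // wb b = d} :=
  Equiv.subtypeSum

theorem finite_fiber_sumElim (ha : ∀ d, Finite {a // wa a = d}) (hb : ∀ d, Finite {b // wb b = d})
    (d : ℕ) : Finite {x // Sum.elim wa wb x = d} :=
  Finite.of_equiv _ (fiberSumElimEquiv wa wb d).symm

theorem weightGenFun_sumElim (ha : ∀ d, Finite {a // wa a = d})
    (hb : ∀ d, Finite {b // wb b = d}) :
    weightGenFun (Sum.elim wa wb) = weightGenFun wa + weightGenFun wb := by
  ext d
  simp only [weightGenFun, coeff_mk, map_add]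
  rw [Nat.card_congr (fiberSumElimEquiv wa wb d), Nat.card_sum, Nat.cast_add]

end Sum

section Prod

variable (wa : A → ℕ) (wb : B → ℕ)

def fiberProdEquiv (d : ℕ) :
    {p : A × B // wa p.1 + wb p.2 = d} ≃
      Σ ij : antidiagonal d, {a // wa a = ij.1.1} × {b // wb b = ij.1.2} where
  toFun p := ⟨⟨(wa p.1.1, wb p.1.2), mem_antidiagonal.2 p.2⟩, ⟨p.1.1, rfl⟩, ⟨p.1.2, rfl⟩⟩
  invFun x := ⟨(x.2.1, x.2.2), by rw [x.2.1.2, x.2.2.2]; exact mem_antidiagonal.1 x.1.2⟩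
  left_inv _ := rfl
  right_inv := by
    rintro ⟨⟨⟨i, j⟩, hij⟩, ⟨a, ha⟩, ⟨b, hb⟩⟩
    dsimp only at ha hb
    subst ha hb
    rfl

theorem finite_fiber_prod (ha : ∀ d, Finite {a // wa a = d}) (hb : ∀ d, Finite {b // wb b = d})
    (d : ℕ) : Finite {p : A × B // wa p.1 + wb p.2 = d} :=
  Finite.of_equiv _ (fiberProdEquiv wa wb d).symm

theorem weightGenFun_prod (ha : ∀ d, Finite {a // wa a = d})
    (hb : ∀ d, Finite {b // wb b = d}) :
    weightGenFun (fun p : A × B => wa p.1 + wb p.2) = weightGenFun wa * weightGenFun wb := by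
  ext d
  simp only [weightGenFun, coeff_mk, coeff_mul]
  rw [Nat.card_congr (fiberProdEquiv wa wb d), Nat.card_sigma, ← sum_coe_sort (antidiagonal d)]
  simp only [Nat.card_prod, Nat.cast_sum, Nat.cast_mul]

end Prod

theorem finite_fiber_const_add (c d : ℕ) : Finite {k : ℕ // c + k = d} :=
  have : Subsingleton {k : ℕ // c + k = d} := ⟨fun k l => Subtype.ext (by omega)⟩
  inferInstance

theorem weightGenFun_const_add (c : ℕ) :
    weightGenFun (fun k : ℕ => c + k) = X ^ c * PowerSeries.mk fun _ => (1 : ℤ) := by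
  ext d
  rw [weightGenFun, coeff_mk, coeff_X_pow_mul', coeff_mk]
  split_ifs with hcd
  · have : Unique {k : ℕ // c + k = d} :=
      ⟨⟨⟨d - c, by omega⟩⟩, fun k => Subtype.ext (by have := k.2; show k.1 = d - c; omega)⟩
    simp
  · have : IsEmpty {k : ℕ // c + k = d} := ⟨fun k => hcd (by omega)⟩
    simp

end WeightGenFun

namespace Nat

def succAbove (p r : ℕ) : ℕ := if r < p then r else r + 1

def predAbove (p r : ℕ) : ℕ := if r < p then r else r - 1

variable {p r : ℕ}

theorem succAbove_ne (p r : ℕ) : succAbove p r ≠ p := by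
  unfold succAbove; split_ifs <;> omega

theorem predAbove_succAbove (p r : ℕ) : predAbove p (succAbove p r) = r := by
  unfold succAbove predAbove; split_ifs <;> omega

theorem succAbove_predAbove (h : r ≠ p) : succAbove p (predAbove p r) = r := by
  unfold succAbove predAbove; split_ifs <;> omega

theorem succAbove_injective (p : ℕ) : Function.Injective (succAbove p) :=
  Function.LeftInverse.injective (predAbove_succAbove p)

theorem succAbove_lt_succAbove_iff {r' : ℕ} : succAbove p r < succAbove p r' ↔ r < r' := by
  unfold succAbove; split_ifs <;> omega

theorem le_succAbove (p r : ℕ) : r ≤ succAbove p r := by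
  unfold succAbove; split_ifs <;> omega

theorem succAbove_zero (hp : 0 < p) : succAbove p 0 = 0 := if_pos hp

theorem eq_or_exists_succAbove (p r : ℕ) : r = p ∨ ∃ s, succAbove p s = r :=
  (eq_or_ne r p).imp_right fun h => ⟨_, succAbove_predAbove h⟩

end Nat

open Nat (succAbove predAbove)

theorem sum_insert_image_succAbove {M : Type*} [AddCommMonoid M] (F : ℕ → M) (p : ℕ)
    (t : Finset ℕ) :
    ∑ r ∈ insert p (t.image (succAbove p)), F r = F p + ∑ r ∈ t, F (succAbove p r) := by
  rw [sum_insert (by simp [Nat.succAbove_ne]),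
    sum_image fun _ _ _ _ h => Nat.succAbove_injective p h]

def insertAt (p v : ℕ) (β : WeakComp) : WeakComp :=
  Finsupp.onFinset (insert p (β.support.image (succAbove p)))
    (fun r => if r = p then v else β (predAbove p r)) fun r hr => by
      rw [mem_insert, mem_image]
      split_ifs at hr with h
      · exact Or.inl h
      · exact Or.inr ⟨_, Finsupp.mem_support_iff.2 hr, Nat.succAbove_predAbove h⟩

section insertAt

variable {p v : ℕ} {β : WeakComp}

theorem support_insertAt_subset :
    (insertAt p v β).support ⊆ insert p (β.support.image (succAbove p)) :=
  Finsupp.support_onFinset_subset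

@[simp] theorem insertAt_self : insertAt p v β p = v := if_pos rfl

@[simp] theorem insertAt_succAbove (r : ℕ) : insertAt p v β (succAbove p r) = β r := by
  simp [insertAt, Nat.succAbove_ne, Nat.predAbove_succAbove]

theorem insertAt_of_lt {r : ℕ} (h : r < p) : insertAt p v β r = β r := by
  simpa [Nat.succAbove, h] using insertAt_succAbove (p := p) (v := v) (β := β) r

theorem insertAt_injective (p v : ℕ) : Function.Injective (insertAt p v) := fun β β' h =>
  Finsupp.ext fun r => by simpa using DFunLike.congr_fun h (succAbove p r)

theorem insertAt_le (hβ : ∀ r, β r ≤ v) (r : ℕ) : insertAt p v β r ≤ v := by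
  rcases Nat.eq_or_exists_succAbove p r with rfl | ⟨s, rfl⟩
  · rw [insertAt_self]
  · rw [insertAt_succAbove]
    exact hβ s

end insertAt

def eraseAt (p : ℕ) (α : WeakComp) : WeakComp :=
  Finsupp.comapDomain (succAbove p) α (Nat.succAbove_injective p).injOn

@[simp] theorem eraseAt_apply (p : ℕ) (α : WeakComp) (r : ℕ) :
    eraseAt p α r = α (succAbove p r) := rfl

theorem insertAt_eraseAt (p : ℕ) (α : WeakComp) : insertAt p (α p) (eraseAt p α) = α := by
  ext r
  by_cases h : r = p
  · rw [h, insertAt_self]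
  · rw [← Nat.succAbove_predAbove h, insertAt_succAbove, eraseAt_apply]

section Snowy

variable {α β : WeakComp} {p v : ℕ}

theorem Snowy.insertAt (hβ : Snowy β) (hv : ∀ r, β r < v) : Snowy (insertAt p v β) := by
  intro r r' hpos heq
  rcases Nat.eq_or_exists_succAbove p r with hr | ⟨s, rfl⟩ <;>
    rcases Nat.eq_or_exists_succAbove p r' with hr' | ⟨s', rfl⟩
  · rw [hr, hr']
  · rw [hr, insertAt_self, insertAt_succAbove] at heq
    exact absurd heq (hv s').ne'
  · rw [hr', insertAt_self, insertAt_succAbove] at heq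
    exact absurd heq (hv s).ne
  · rw [insertAt_succAbove, insertAt_succAbove] at heq
    rw [insertAt_succAbove] at hpos
    rw [hβ s s' hpos heq]

theorem Snowy.eraseAt (hα : Snowy α) (p : ℕ) : Snowy (eraseAt p α) := fun _ _ hpos heq =>
  Nat.succAbove_injective p (hα _ _ hpos heq)

end Snowy

theorem wsum_eq_sum_of_support_subset {α : WeakComp} {s : Finset ℕ} (h : α.support ⊆ s) :
    wsum α = ∑ r ∈ s, α r :=
  Finsupp.sum_of_support_subset α h _ fun _ _ => rfl

theorem wsum_insertAt (p v : ℕ) (β : WeakComp) : wsum (insertAt p v β) = v + wsum β := by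
  rw [wsum_eq_sum_of_support_subset support_insertAt_subset, sum_insert_image_succAbove]
  simp [wsum, Finsupp.sum]

def invCountAt (α : WeakComp) (r' : ℕ) : ℕ := #{r ∈ Ico 1 r' | α r < α r'}

theorem invCount_eq_sum (α : WeakComp) : invCount α = ∑ r' ∈ α.support, invCountAt α r' := by
  rw [invCount, card_filter, sum_product_right]
  refine sum_congr rfl fun r' hr' => ?_
  have hr'S : r' ≤ α.support.sup id := le_sup (f := id) hr'
  rw [← card_filter, invCountAt]
  congr 1
  ext r
  simp only [mem_filter, mem_Icc, mem_Ico]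
  omega

theorem invCount_eq_sum_of_support_subset {α : WeakComp} {s : Finset ℕ} (h : α.support ⊆ s) :
    invCount α = ∑ r' ∈ s, invCountAt α r' := by
  rw [invCount_eq_sum]
  refine sum_subset h fun r' _ hr' => card_eq_zero.2 (filter_eq_empty_iff.2 fun r _ => ?_)
  rw [Finsupp.notMem_support_iff.1 hr']
  exact Nat.not_lt_zero _

section invCountAt

variable {p v : ℕ} {β : WeakComp}

theorem invCountAt_insertAt_self (hv : ∀ r, β r < v) :
    invCountAt (insertAt p v β) p = p - 1 := by
  rw [invCountAt, filter_true_of_mem fun r hr => ?_, Nat.card_Ico]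
  rw [insertAt_self, insertAt_of_lt (mem_Ico.1 hr).2]
  exact hv r

theorem invCountAt_insertAt_succAbove (hv : ∀ r, β r < v) (hp : 0 < p) (r' : ℕ) :
    invCountAt (insertAt p v β) (succAbove p r') = invCountAt β r' := by
  have hne : ∀ r ∈ {r ∈ Ico 1 (succAbove p r') | insertAt p v β r < β r'}, r ≠ p := by
    rintro r hr rfl
    rw [mem_filter, insertAt_self] at hr
    exact (hv r').not_gt hr.2
  rw [invCountAt, invCountAt, insertAt_succAbove]
  symm
  refine card_nbij' (succAbove p) (predAbove p) (fun r hr => ?_) (fun r hr => ?_)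
    (fun r _ => Nat.predAbove_succAbove p r) (fun r hr => Nat.succAbove_predAbove (hne r hr))
  · simp only [mem_coe, mem_filter, mem_Ico, insertAt_succAbove] at hr ⊢
    exact ⟨⟨hr.1.1.trans (Nat.le_succAbove p r), Nat.succAbove_lt_succAbove_iff.2 hr.1.2⟩, hr.2⟩
  · obtain ⟨s, rfl⟩ := (Nat.eq_or_exists_succAbove p r).resolve_left (hne r hr)
    simp only [mem_coe, mem_filter, mem_Ico, insertAt_succAbove,
      Nat.predAbove_succAbove] at hr ⊢
    refine ⟨⟨Nat.pos_of_ne_zero ?_, Nat.succAbove_lt_succAbove_iff.1 hr.1.2⟩, hr.2⟩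
    rintro rfl
    rw [Nat.succAbove_zero hp] at hr
    exact absurd hr.1.1 (by omega)

end invCountAt

def sizeInv (α : WeakComp) : ℕ := wsum α + invCount α

theorem sizeInv_insertAt {p v : ℕ} {β : WeakComp} (hp : 0 < p) (hv : ∀ r, β r < v) :
    sizeInv (insertAt p v β) = sizeInv β + v + (p - 1) := by
  have hinv : invCount (insertAt p v β) = (p - 1) + invCount β := by
    rw [invCount_eq_sum_of_support_subset support_insertAt_subset, sum_insert_image_succAbove,
      invCountAt_insertAt_self hv, invCount_eq_sum]
    exact congrArg _ (sum_congr rfl fun r _ => invCountAt_insertAt_succAbove hv hp r)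
  rw [sizeInv, sizeInv, wsum_insertAt, hinv]
  ring

theorem sizeInv_zero : sizeInv 0 = 0 := by
  simp [sizeInv, wsum, invCount]

abbrev BoundedSnowy (M : ℕ) : Type := {α : WeakComp // α 0 = 0 ∧ Snowy α ∧ ∀ r, α r ≤ M}

namespace BoundedSnowy

instance : Unique (BoundedSnowy 0) where
  default := ⟨0, rfl, fun _ _ h => absurd h (Nat.lt_irrefl 0), fun _ => le_rfl⟩
  uniq α := Subtype.ext (Finsupp.ext fun r => Nat.le_zero.1 (α.2.2.2 r))

variable (M : ℕ)

def extend : BoundedSnowy M ⊕ BoundedSnowy M × ℕ → BoundedSnowy (M + 1)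
  | .inl β => ⟨β.1, β.2.1, β.2.2.1, fun r => (β.2.2.2 r).trans M.le_succ⟩
  | .inr (β, k) => ⟨insertAt (k + 1) (M + 1) β.1,
      (insertAt_of_lt k.succ_pos).trans β.2.1,
      β.2.2.1.insertAt fun r => Nat.lt_succ_of_le (β.2.2.2 r),
      insertAt_le fun r => (β.2.2.2 r).trans M.le_succ⟩

theorem extend_injective : Function.Injective (extend M) := by
  have hmax {k : ℕ} {β : BoundedSnowy M} {α : BoundedSnowy (M + 1)}
      (h : extend M (.inr (β, k)) = α) : α.1 (k + 1) = M + 1 := by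
    rw [← h]
    exact insertAt_self
  rintro (β | ⟨β, k⟩) (β' | ⟨β', k'⟩) h
  · have hval := congrArg Subtype.val h
    exact congrArg Sum.inl (Subtype.ext hval)
  · have h1 : β.1 (k' + 1) = M + 1 := hmax h.symm
    have := β.2.2.2 (k' + 1)
    omega
  · have h1 : β'.1 (k + 1) = M + 1 := hmax h
    have := β'.2.2.2 (k + 1)
    omega
  · have hk : k + 1 = k' + 1 := (extend M (.inr (β', k'))).2.2.1 _ _
      (by rw [hmax h]; omega) ((hmax h).trans (hmax rfl).symm)
    obtain rfl : k = k' := by omega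
    exact congrArg (Sum.inr ∘ (·, k))
      (Subtype.ext (insertAt_injective _ _ (congrArg Subtype.val h)))

theorem extend_surjective : Function.Surjective (extend M) := by
  rintro ⟨α, h0, hα, hle⟩
  by_cases hM : ∃ p, α p = M + 1
  · obtain ⟨p, hp⟩ := hM
    have hp0 : 0 < p := Nat.pos_of_ne_zero fun h => by rw [h, h0] at hp; omega
    have herase : ∀ r, eraseAt p α r ≤ M := fun r => by
      have hne := mt (hα p _ (by omega)) (Nat.succAbove_ne p r).symm
      have := hle (succAbove p r)
      rw [eraseAt_apply]
      omega
    refine ⟨.inr (⟨eraseAt p α, ?_, hα.eraseAt p, herase⟩, p - 1), Subtype.ext ?_⟩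
    · rw [eraseAt_apply, Nat.succAbove_zero hp0, h0]
    · change insertAt (p - 1 + 1) (M + 1) (eraseAt p α) = α
      rw [Nat.sub_add_cancel hp0, ← hp, insertAt_eraseAt]
  · push Not at hM
    exact ⟨.inl ⟨α, h0, hα, fun r => Nat.le_of_lt_succ ((hle r).lt_of_ne (hM r))⟩, rfl⟩

theorem extend_bijective : Function.Bijective (extend M) :=
  ⟨extend_injective M, extend_surjective M⟩

def extendEquiv : BoundedSnowy M ⊕ BoundedSnowy M × ℕ ≃ BoundedSnowy (M + 1) :=
  Equiv.ofBijective _ (extend_bijective M)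

theorem sizeInv_extendEquiv (x : BoundedSnowy M ⊕ BoundedSnowy M × ℕ) :
    sizeInv (extendEquiv M x).1 =
      Sum.elim (fun β => sizeInv β.1) (fun y => sizeInv y.1.1 + ((M + 1) + y.2)) x := by
  rcases x with β | ⟨β, k⟩
  · rfl
  · change sizeInv (insertAt (k + 1) (M + 1) β.1) = _
    rw [sizeInv_insertAt k.succ_pos fun r => Nat.lt_succ_of_le (β.2.2.2 r)]
    simp only [Sum.elim_inr]
    omega

theorem finite_fiber_sizeInv (d : ℕ) : Finite {α : BoundedSnowy M // sizeInv α.1 = d} := by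
  induction M generalizing d with
  | zero => infer_instance
  | succ M ih =>
    exact finite_fiber_congr (extendEquiv M) (sizeInv_extendEquiv M)
      (finite_fiber_sumElim _ _ ih (finite_fiber_prod _ _ ih (finite_fiber_const_add _))) d

theorem weightGenFun_sizeInv :
    weightGenFun (fun α : BoundedSnowy M => sizeInv α.1) =
      ∏ m ∈ Icc 1 M, (1 + X ^ m * PowerSeries.mk fun _ => (1 : ℤ)) := by
  induction M with
  | zero =>
    rw [weightGenFun_of_unique, Icc_eq_empty (by omega), prod_empty]
    exact (congrArg (X ^ ·) sizeInv_zero).trans (pow_zero _)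
  | succ M ih =>
    rw [weightGenFun_congr (extendEquiv M) (sizeInv_extendEquiv M),
      weightGenFun_sumElim _ _ (finite_fiber_sizeInv M)
        (finite_fiber_prod _ _ (finite_fiber_sizeInv M) (finite_fiber_const_add _)),
      weightGenFun_prod _ _ (finite_fiber_sizeInv M) (finite_fiber_const_add _),
      weightGenFun_const_add, ih, prod_Icc_succ_top (Nat.le_add_left 1 M)]
    ring

end BoundedSnowy

/-- for every `M ≥ 0`, the generating function of `raj` over snowy
weak compositions with entries at most `M` equals `∏_{m=1}^M (1 + q^m/(1-q))`
as formal power series. -/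
theorem snowy_raj_generating_function (M : ℕ) :
    (PowerSeries.mk fun d =>
        (Nat.card {α : WeakComp // α 0 = 0 ∧ Snowy α ∧ (∀ r, α r ≤ M) ∧
            wsum α + invCount α = d} : ℤ)) =
      ∏ m ∈ Finset.Icc 1 M,
        (1 + (PowerSeries.X : PowerSeries ℤ) ^ m * PowerSeries.mk fun _ => (1 : ℤ)) := by
  rw [← BoundedSnowy.weightGenFun_sizeInv M, weightGenFun]
  congr! 3 with d
  exact Nat.card_congr ((Equiv.subtypeSubtypeEquivSubtypeInter
    (fun α : WeakComp => α 0 = 0 ∧ Snowy α ∧ ∀ r, α r ≤ M) (fun α => sizeInv α = d)).trans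
    (Equiv.subtypeEquivRight fun α => by simp only [sizeInv, and_assoc])).symm

end
end

section
/- The q-Bell polynomials B_n(q), defined by B_n(q) = Σ_{k=0}^n S_{n,k}(q) where S_{n+1,k}(q) = q^{k−1} S_{n,k−1}(q) + [k]_q S_{n,k}(q) with S_{0,0}(q) = 1, S_{0,k}(q) = 0 for k > 0, and [k]_q = 1 + q + ... + q^{k−1}, satisfy B_n(q) = Σ_{R} q^{GR_n(R)}, summing over all non-attacking rook placements R on the staircase Stair_n = {(r,c) : 1 ≤ r ≤ n−1, 1 ≤ c ≤ n−r}, where GR_n(R) is the number of cells of Stair_n not weakly above a rook in its column and not weakly left of a rook in its row. -/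
open scoped Classical

noncomputable section

/-!
Deleting the first column of `Stair_{n+1}` leaves `Stair_n` moved one column to the right. So a
placement on `Stair_{n+1}` is a placement `R` on `Stair_n`, shifted right, plus possibly one rook in
column one, in one of the `n - |R|` rows that `R` leaves free. The shifted cells keep their status.
Without the extra rook, the uncancelled cells of column one are those in the free rows, a factor
`q ^ (n - |R|)`; with the extra rook in a free row `r`, only the free rows below `r` survive, and
summing over `r` gives `[n - |R|]_q`. Hence the placements with `n - k` rooks, weighted by
`q ^ GR_n`, satisfy the recurrence of `S_{n,k}(q)`, and summing over `k` gives `B_n(q)`.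
-/

open Finset Polynomial

lemma Finset.sum_card_filter_lt {α M : Type*} [LinearOrder α] [AddCommMonoid M] (s : Finset α)
    (f : ℕ → M) : ∑ x ∈ s, f #{y ∈ s | x < y} = ∑ i ∈ range #s, f i := by
  set g : α → ℕ := fun x => #{y ∈ s | x < y}
  have hg : StrictAntiOn g s := by
    intro x _ x' hx' hxx'
    refine card_lt_card ((ssubset_iff_of_subset fun y hy => ?_).2 ⟨x', ?_, ?_⟩)
    · simp only [mem_filter] at hy ⊢
      exact ⟨hy.1, hxx'.trans hy.2⟩
    · simpa [mem_filter] using ⟨hx', hxx'⟩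
    · simp
  have himage : s.image g = range #s := by
    refine eq_of_subset_of_card_le (fun i hi => ?_) ?_
    · obtain ⟨x, hx, rfl⟩ := mem_image.1 hi
      exact mem_range.2 (card_lt_card (filter_ssubset.2 ⟨x, hx, lt_irrefl x⟩))
    · rw [card_range, card_image_of_injOn hg.injOn]
  rw [← himage, sum_image hg.injOn]

section Staircase

variable {n : ℕ}

lemma mem_stair {p : ℕ × ℕ} : p ∈ stair n ↔ 1 ≤ p.1 ∧ 1 ≤ p.2 ∧ p.1 + p.2 ≤ n := by
  simp only [stair, mem_filter, mem_product, mem_Icc]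
  omega

def colOne : ℕ ↪ ℕ × ℕ := ⟨fun r => (r, 1), fun _ _ h => (Prod.ext_iff.1 h).1⟩

def shiftCol : ℕ × ℕ ↪ ℕ × ℕ :=
  ⟨fun p => (p.1, p.2 + 1), fun p q h => by simpa [Prod.ext_iff] using h⟩

@[simp] lemma colOne_apply (r : ℕ) : colOne r = (r, 1) := rfl

@[simp] lemma shiftCol_apply (p : ℕ × ℕ) : shiftCol p = (p.1, p.2 + 1) := rfl

lemma disjoint_map_colOne_map_shiftCol :
    Disjoint ((Icc 1 n).map colOne) ((stair n).map shiftCol) := by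
  simp only [disjoint_left, mem_map, colOne_apply, shiftCol_apply, not_exists, not_and]
  rintro _ ⟨r, -, rfl⟩ q hq h
  have := (mem_stair.1 hq).2.1
  simp only [Prod.ext_iff] at h
  omega

lemma stair_succ : stair (n + 1) = (Icc 1 n).map colOne ∪ (stair n).map shiftCol := by
  ext ⟨a, b⟩
  simp only [mem_union, mem_map, mem_Icc, mem_stair, colOne_apply, shiftCol_apply, Prod.ext_iff]
  constructor
  · rintro ⟨ha, hb, hab⟩
    by_cases hb1 : b = 1
    · exact Or.inl ⟨a, by omega, rfl, hb1.symm⟩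
    · exact Or.inr ⟨(a, b - 1), by simp only; omega, rfl, by simp only; omega⟩
  · rintro (⟨r, hr, rfl, rfl⟩ | ⟨q, hq, rfl, rfl⟩) <;> omega

lemma stair_zero : stair 0 = ∅ := by
  ext
  simp only [mem_stair, notMem_empty, iff_false]
  omega

end Staircase

section RookPlacements

variable {n : ℕ} {R S : Finset (ℕ × ℕ)}

def IsNonAttacking (R : Finset (ℕ × ℕ)) : Prop :=
  ∀ p ∈ R, ∀ q ∈ R, (p.1 = q.1 ∨ p.2 = q.2) → p = q

def rookPlacements (n : ℕ) : Finset (Finset (ℕ × ℕ)) :=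
  (stair n).powerset.filter IsNonAttacking

lemma mem_rookPlacements : R ∈ rookPlacements n ↔ R ⊆ stair n ∧ IsNonAttacking R := by
  rw [rookPlacements, mem_filter, mem_powerset]

lemma rookPlacements_zero : rookPlacements 0 = {∅} := by
  simp [rookPlacements, stair_zero, IsNonAttacking]

lemma IsNonAttacking.card_image_fst (h : IsNonAttacking R) : #(R.image Prod.fst) = #R :=
  card_image_of_injOn fun p hp q hq hpq => h p hp q hq (Or.inl hpq)

lemma image_fst_subset_of_subset_stair (h : R ⊆ stair n) : R.image Prod.fst ⊆ Icc 1 (n - 1) := by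
  intro r hr
  obtain ⟨p, hp, rfl⟩ := mem_image.1 hr
  have := mem_stair.1 (h hp)
  rw [mem_Icc]
  omega

lemma card_le_of_mem_rookPlacements (hR : R ∈ rookPlacements n) : #R ≤ n - 1 := by
  obtain ⟨hsub, hna⟩ := mem_rookPlacements.1 hR
  simpa [← hna.card_image_fst] using card_le_card (image_fst_subset_of_subset_stair hsub)

def freeRows (n : ℕ) (R : Finset (ℕ × ℕ)) : Finset ℕ := Icc 1 n \ R.image Prod.fst

lemma mem_freeRows {r : ℕ} : r ∈ freeRows n R ↔ (1 ≤ r ∧ r ≤ n) ∧ ∀ p ∈ R, p.1 ≠ r := by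
  simp only [freeRows, mem_sdiff, mem_Icc, mem_image, not_exists, not_and, ne_eq]

lemma card_freeRows (hR : R ∈ rookPlacements n) : #(freeRows n R) = n - #R := by
  obtain ⟨hsub, hna⟩ := mem_rookPlacements.1 hR
  have : R.image Prod.fst ⊆ Icc 1 n :=
    (image_fst_subset_of_subset_stair hsub).trans (Icc_subset_Icc_right (Nat.sub_le n 1))
  rw [freeRows, card_sdiff_of_subset this, hna.card_image_fst, Nat.card_Icc, Nat.add_sub_cancel]

lemma IsNonAttacking.mono (h : IsNonAttacking S) (hRS : R ⊆ S) : IsNonAttacking R :=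
  fun p hp q hq => h p (hRS hp) q (hRS hq)

lemma IsNonAttacking.insert (h : IsNonAttacking S) {a : ℕ × ℕ}
    (ha : ∀ q ∈ S, a.1 ≠ q.1 ∧ a.2 ≠ q.2) : IsNonAttacking (insert a S) := by
  intro p hp q hq hpq
  rcases mem_insert.1 hp with rfl | hpS <;> rcases mem_insert.1 hq with rfl | hqS
  · rfl
  · have := ha q hqS; tauto
  · have := ha p hpS; omega
  · exact h p hpS q hqS hpq

lemma isNonAttacking_map_shiftCol : IsNonAttacking (R.map shiftCol) ↔ IsNonAttacking R := by
  simp [IsNonAttacking, Prod.ext_iff]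

lemma map_shiftCol_mem_rookPlacements (hR : R ∈ rookPlacements n) :
    R.map shiftCol ∈ rookPlacements (n + 1) := by
  rw [mem_rookPlacements] at hR ⊢
  refine ⟨?_, isNonAttacking_map_shiftCol.2 hR.2⟩
  rw [stair_succ]
  exact (map_subset_map.2 hR.1).trans subset_union_right

lemma insert_colOne_mem_rookPlacements (hR : R ∈ rookPlacements n) {r : ℕ}
    (hr : r ∈ freeRows n R) : insert (r, 1) (R.map shiftCol) ∈ rookPlacements (n + 1) := by
  obtain ⟨hsub, hna⟩ := mem_rookPlacements.1 (map_shiftCol_mem_rookPlacements hR)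
  obtain ⟨hr, hrR⟩ := mem_freeRows.1 hr
  refine mem_rookPlacements.2 ⟨insert_subset ?_ hsub, hna.insert ?_⟩
  · rw [stair_succ]
    exact mem_union_left _ (mem_map_of_mem colOne (mem_Icc.2 hr))
  · simp only [mem_map, shiftCol_apply]
    rintro _ ⟨q, hq, rfl⟩
    exact ⟨(hrR q hq).symm, by have := (mem_stair.1 ((mem_rookPlacements.1 hR).1 hq)).2.1; omega⟩

lemma exists_eq_map_shiftCol (hR : R ⊆ stair (n + 1)) (h : ∀ p ∈ R, p.2 ≠ 1) :
    ∃ R' ⊆ stair n, R = R'.map shiftCol := by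
  refine subset_map_iff.1 fun p hp => ?_
  rcases mem_union.1 (stair_succ ▸ hR hp) with hp' | hp'
  · obtain ⟨r, -, rfl⟩ := mem_map.1 hp'
    exact absurd rfl (h _ hp)
  · exact hp'

lemma filter_rookPlacements_succ_not_colOne :
    (rookPlacements (n + 1)).filter (fun R => ∀ p ∈ R, p.2 ≠ 1) =
      (rookPlacements n).map (mapEmbedding shiftCol).toEmbedding := by
  ext R
  simp only [mem_filter, mem_map, RelEmbedding.coe_toEmbedding, mapEmbedding_apply]
  constructor
  · rintro ⟨hR, hcol⟩
    obtain ⟨hsub, hna⟩ := mem_rookPlacements.1 hR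
    obtain ⟨R', hR'sub, rfl⟩ := exists_eq_map_shiftCol hsub hcol
    exact ⟨R', mem_rookPlacements.2 ⟨hR'sub, isNonAttacking_map_shiftCol.1 hna⟩, rfl⟩
  · rintro ⟨R', hR', rfl⟩
    refine ⟨map_shiftCol_mem_rookPlacements hR', ?_⟩
    simp only [mem_map, shiftCol_apply]
    rintro _ ⟨q, hq, rfl⟩
    have := (mem_stair.1 ((mem_rookPlacements.1 hR').1 hq)).2.1
    simp only
    omega

lemma colOne_notMem_map_shiftCol (hR : R ⊆ stair n) (r : ℕ) : (r, 1) ∉ R.map shiftCol := by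
  simp only [mem_map, shiftCol_apply, Prod.ext_iff, not_exists, not_and]
  intro q hq _
  have := (mem_stair.1 (hR hq)).2.1
  omega

lemma filter_rookPlacements_succ_colOne :
    (rookPlacements (n + 1)).filter (fun R => ¬ ∀ p ∈ R, p.2 ≠ 1) =
      ((rookPlacements n).sigma (freeRows n)).image
        fun x => insert (x.2, 1) (x.1.map shiftCol) := by
  ext R
  simp only [mem_filter, mem_image, mem_sigma, Sigma.exists, not_forall, not_not]
  constructor
  · rintro ⟨hR, p₀, hp₀, hp₀1⟩
    obtain ⟨hsub, hna⟩ := mem_rookPlacements.1 hR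
    obtain ⟨R', hR'sub, hR'⟩ : ∃ R' ⊆ stair n, R.erase p₀ = R'.map shiftCol :=
      exists_eq_map_shiftCol ((erase_subset _ _).trans hsub) fun p hp hp1 =>
        ne_of_mem_erase hp (hna p (mem_of_mem_erase hp) p₀ hp₀ (Or.inr (hp1.trans hp₀1.symm)))
    have hR'na : IsNonAttacking R' :=
      isNonAttacking_map_shiftCol.1 (hR' ▸ hna.mono (erase_subset _ _))
    have hfree : p₀.1 ∈ freeRows n R' := by
      have := mem_stair.1 (hsub hp₀)
      refine mem_freeRows.2 ⟨by omega, fun q hq hq1 => ?_⟩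
      have hq' : shiftCol q ∈ R.erase p₀ := hR' ▸ mem_map_of_mem shiftCol hq
      exact ne_of_mem_erase hq' (hna _ (mem_of_mem_erase hq') p₀ hp₀ (Or.inl hq1))
    refine ⟨R', p₀.1, ⟨mem_rookPlacements.2 ⟨hR'sub, hR'na⟩, hfree⟩, ?_⟩
    rw [← hR', ← hp₀1, insert_erase hp₀]
  · rintro ⟨R', r, ⟨hR', hr⟩, rfl⟩
    exact ⟨insert_colOne_mem_rookPlacements hR' hr, (r, 1), mem_insert_self _ _, rfl⟩

lemma injOn_insert_colOne_map_shiftCol :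
    Set.InjOn (fun x : (_ : Finset (ℕ × ℕ)) × ℕ => insert (x.2, 1) (x.1.map shiftCol))
      ((rookPlacements n).sigma (freeRows n)) := by
  rintro ⟨R, r⟩ hx ⟨S, s⟩ hy h
  simp only [coe_sigma, Set.mem_sigma_iff, mem_coe] at hx hy h
  have hRn := colOne_notMem_map_shiftCol (mem_rookPlacements.1 hx.1).1
  have hSn := colOne_notMem_map_shiftCol (mem_rookPlacements.1 hy.1).1
  have hrs : r = s := by
    have := h ▸ mem_insert_self (r, 1) (R.map shiftCol)
    rcases mem_insert.1 this with h' | h'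
    · exact (Prod.ext_iff.1 h').1
    · exact absurd h' (hSn r)
  subst hrs
  have : R.map shiftCol = S.map shiftCol := by
    rw [← erase_insert (hRn r), h, erase_insert (hSn r)]
  rw [map_injective shiftCol this]

lemma sum_rookPlacements_succ {M : Type*} [AddCommMonoid M] (f : Finset (ℕ × ℕ) → M) :
    ∑ R ∈ rookPlacements (n + 1), f R =
      ∑ R ∈ rookPlacements n,
        (f (R.map shiftCol) + ∑ r ∈ freeRows n R, f (insert (r, 1) (R.map shiftCol))) := by
  rw [← sum_filter_add_sum_filter_not _ fun R => ∀ p ∈ R, p.2 ≠ 1,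
    filter_rookPlacements_succ_not_colOne, filter_rookPlacements_succ_colOne, sum_map,
    sum_image injOn_insert_colOne_map_shiftCol, sum_sigma, sum_add_distrib]
  rfl

end RookPlacements

section GarsiaRemmel

variable {n : ℕ} {R : Finset (ℕ × ℕ)}

def Covers (p q : ℕ × ℕ) : Prop := (p.2 = q.2 ∧ q.1 ≤ p.1) ∨ (p.1 = q.1 ∧ q.2 ≤ p.2)

lemma GRcount_eq_card_filter (n : ℕ) (R : Finset (ℕ × ℕ)) :
    GRcount n R = #{q ∈ stair n | ¬ ∃ p ∈ R, Covers p q} := by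
  unfold GRcount Covers
  congr

lemma GRcount_succ (n : ℕ) (R : Finset (ℕ × ℕ)) :
    GRcount (n + 1) R = #{r ∈ Icc 1 n | ¬ ∃ p ∈ R, Covers p (r, 1)} +
      #{q ∈ stair n | ¬ ∃ p ∈ R, Covers p (shiftCol q)} := by
  rw [GRcount_eq_card_filter, stair_succ, filter_union,
    card_union_of_disjoint (disjoint_filter_filter disjoint_map_colOne_map_shiftCol),
    filter_map, filter_map, card_map, card_map]
  rfl

lemma exists_covers_shiftCol_iff {q : ℕ × ℕ} :
    (∃ p ∈ R.map shiftCol, Covers p (shiftCol q)) ↔ ∃ p ∈ R, Covers p q := by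
  simp only [mem_map, exists_exists_and_eq_and]
  simp [Covers]

lemma not_covers_colOne_shiftCol {r : ℕ} {q : ℕ × ℕ} (hq : 1 ≤ q.2) :
    ¬ Covers (r, 1) (shiftCol q) := by
  simp only [Covers, shiftCol_apply]
  omega

lemma exists_covers_colOne_iff (hR : R ⊆ stair n) {r : ℕ} :
    (∃ p ∈ R.map shiftCol, Covers p (r, 1)) ↔ ∃ p ∈ R, p.1 = r := by
  simp only [mem_map, exists_exists_and_eq_and]
  refine exists_congr fun p => and_congr_right fun hp => ?_
  have := (mem_stair.1 (hR hp)).2.1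
  simp only [Covers, shiftCol_apply]
  omega

lemma card_filter_not_covers_shiftCol {S : Finset (ℕ × ℕ)}
    (hS : ∀ q ∈ stair n, (∃ p ∈ S, Covers p (shiftCol q)) ↔ ∃ p ∈ R, Covers p q) :
    #{q ∈ stair n | ¬ ∃ p ∈ S, Covers p (shiftCol q)} = GRcount n R := by
  rw [GRcount_eq_card_filter, filter_congr fun q hq => not_congr (hS q hq)]

lemma GRcount_succ_map_shiftCol (hR : R ⊆ stair n) :
    GRcount (n + 1) (R.map shiftCol) = #(freeRows n R) + GRcount n R := by
  rw [GRcount_succ, card_filter_not_covers_shiftCol fun _ _ => exists_covers_shiftCol_iff]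
  congr 2
  ext r
  simp only [mem_filter, mem_Icc, mem_freeRows, exists_covers_colOne_iff hR, not_exists, not_and]

lemma GRcount_succ_insert_colOne (hR : R ⊆ stair n) {r : ℕ} :
    GRcount (n + 1) (insert (r, 1) (R.map shiftCol)) =
      #{s ∈ freeRows n R | r < s} + GRcount n R := by
  rw [GRcount_succ, card_filter_not_covers_shiftCol fun q hq => by
    rw [exists_mem_insert, exists_covers_shiftCol_iff,
      or_iff_right (not_covers_colOne_shiftCol (mem_stair.1 hq).2.1)]]
  congr 2
  ext s
  simp only [mem_filter, mem_Icc, mem_freeRows, exists_mem_insert, exists_covers_colOne_iff hR,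
    not_or, not_exists, not_and]
  have : Covers (r, 1) (s, 1) ↔ s ≤ r := by simp [Covers]; omega
  rw [this, not_le]
  tauto

end GarsiaRemmel

section RookStirling

def rookStirling (n k : ℕ) : ℤ[X] :=
  ∑ R ∈ rookPlacements n with #R + k = n, X ^ GRcount n R

lemma rookStirling_zero_zero : rookStirling 0 0 = 1 := by
  simp [rookStirling, rookPlacements_zero, GRcount, stair_zero, filter_singleton]

lemma rookStirling_zero_succ (k : ℕ) : rookStirling 0 (k + 1) = 0 := by
  simp [rookStirling]

lemma rookStirling_succ_zero (n : ℕ) : rookStirling (n + 1) 0 = 0 := by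
  refine sum_eq_zero fun R hR => ?_
  obtain ⟨hR, hcard⟩ := mem_filter.1 hR
  have := card_le_of_mem_rookPlacements hR
  omega

lemma rookStirling_succ_succ (n k : ℕ) :
    rookStirling (n + 1) (k + 1) =
      X ^ k * rookStirling n k + (∑ i ∈ range (k + 1), X ^ i) * rookStirling n (k + 1) := by
  have hcolOne_free : ∀ R ∈ rookPlacements n,
      (if #(R.map shiftCol) + (k + 1) = n + 1 then X ^ GRcount (n + 1) (R.map shiftCol) else 0) =
        X ^ k * if #R + k = n then X ^ GRcount n R else (0 : ℤ[X]) := by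
    intro R hR
    rw [card_map, GRcount_succ_map_shiftCol (mem_rookPlacements.1 hR).1, card_freeRows hR]
    by_cases h : #R + k = n
    · rw [if_pos (by omega), if_pos h, pow_add, show n - #R = k by omega]
    · rw [if_neg (by omega), if_neg h, mul_zero]
  have hcolOne_rook : ∀ R ∈ rookPlacements n,
      ∑ r ∈ freeRows n R, (if #(insert (r, 1) (R.map shiftCol)) + (k + 1) = n + 1 then
          X ^ GRcount (n + 1) (insert (r, 1) (R.map shiftCol)) else 0) =
        (∑ i ∈ range (k + 1), X ^ i) *
          if #R + (k + 1) = n then X ^ GRcount n R else (0 : ℤ[X]) := by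
    intro R hR
    have hsub := (mem_rookPlacements.1 hR).1
    simp only [card_insert_of_notMem (colOne_notMem_map_shiftCol hsub _), card_map,
      GRcount_succ_insert_colOne hsub, sum_ite_irrel, sum_const_zero, pow_add, ← sum_mul]
    by_cases h : #R + (k + 1) = n
    · rw [if_pos (by omega), if_pos h, sum_card_filter_lt, card_freeRows hR,
        show n - #R = k + 1 by omega]
    · rw [if_neg (by omega), if_neg h, mul_zero]
  simp only [rookStirling, sum_filter, sum_rookPlacements_succ, sum_add_distrib, mul_sum]
  rw [sum_congr rfl hcolOne_free, sum_congr rfl hcolOne_rook]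

lemma qStirling_eq_rookStirling : ∀ n k, qStirling n k = rookStirling n k
  | 0, 0 => rookStirling_zero_zero.symm
  | 0, k + 1 => (rookStirling_zero_succ k).symm
  | n + 1, 0 => (rookStirling_succ_zero n).symm
  | n + 1, k + 1 => by
    rw [qStirling, rookStirling_succ_succ, qStirling_eq_rookStirling n k,
      qStirling_eq_rookStirling n (k + 1)]

end RookStirling

/-- `B_n(q) = Σ_R q^{GR_n(R)}` over non-attacking rook placements
`R` on the staircase `Stair_n`. -/
theorem qBell_eq_sum_rook (n : ℕ) :
    qBell n =
      ∑ R ∈ (stair n).powerset.filter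
          (fun R => ∀ p ∈ R, ∀ q ∈ R, (p.1 = q.1 ∨ p.2 = q.2) → p = q),
        Polynomial.X ^ GRcount n R := by
  have hplacements : (stair n).powerset.filter
      (fun R => ∀ p ∈ R, ∀ q ∈ R, (p.1 = q.1 ∨ p.2 = q.2) → p = q) = rookPlacements n := by
    unfold rookPlacements IsNonAttacking
    congr
  have hfiber : ∀ k, rookStirling n k =
      ∑ R ∈ rookPlacements n with n - #R = k, X ^ GRcount n R := fun k =>
    sum_congr (filter_congr fun R hR => by have := card_le_of_mem_rookPlacements hR; omega)
      fun _ _ => rfl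
  rw [hplacements, qBell]
  simp only [qStirling_eq_rookStirling, hfiber]
  exact sum_fiberwise_of_maps_to (fun R _ => mem_range.2 (by omega)) _

end
end

section
/- Let f ∈ Z[x_1, x_2, ...] be nonzero with leading monomial x^α (in tail lexicographic order: x^α > x^γ iff there exists k with α_k > γ_k and α_j = γ_j for all j > k) having coefficient c ≠ 0. Let i be an index with α_i > α_{i+1}, and suppose every monomial x^γ appearing in f satisfies γ_i ≤ α_i. Then the polynomial π_i(x_{i+1} f), where π_i(g) = (x_i g − s_i(x_i g))/(x_i − x_{i+1}) and s_i swaps x_i and x_{i+1}, has leading monomial x_i · x^{s_i α} with coefficient c. -/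
open scoped Classical

noncomputable section

/-!
Tail lexicographic order is the colexicographic order on `ℕ →₀ ℕ`, a monomial order, so
leading monomials add and leading coefficients multiply. Because no monomial of `f` has
`x_i`-exponent above `α_i`, the swap `s_i` keeps every monomial of `f` other than `x^α` below
`x^{s_i α}`; hence `s_i f` has leading term `c x^{s_i α}`, which beats `x^α` as
`α_{i+1} < α_i`, and `f - s_i f` has leading term `-c x^{s_i α}`. Comparing leading terms in
`(x_i - x_{i+1}) P = x_i x_{i+1} (f - s_i f)`, where `x_i - x_{i+1}` has leading term
`-x_{i+1}`, gives `P` the leading term `c x_i x^{s_i α}`.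
-/

open MvPolynomial MonomialOrder

namespace MonomialOrder

section Degree

variable {σ R : Type*} [CommSemiring R] (m : MonomialOrder σ)

theorem degree_eq_of_forall_lt {f : MvPolynomial σ R} {d : σ →₀ ℕ} (hd : f.coeff d ≠ 0)
    (h : ∀ e, f.coeff e ≠ 0 → e ≠ d → e ≺[m] d) : m.degree f = d := by
  refine m.toSyn.injective (le_antisymm ?_ (m.le_degree (mem_support_iff.2 hd)))
  refine m.degree_le_iff.2 fun e he => ?_
  rcases eq_or_ne e d with rfl | hne
  · exact le_rfl
  · exact (h e (mem_support_iff.1 he) hne).le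

theorem lt_degree_of_ne {f : MvPolynomial σ R} {e : σ →₀ ℕ} (he : f.coeff e ≠ 0)
    (hne : e ≠ m.degree f) : e ≺[m] m.degree f :=
  (m.le_degree (mem_support_iff.2 he)).lt_of_ne (m.toSyn.injective.ne hne)

end Degree

variable {σ : Type*} [LinearOrder σ] [WellFoundedLT σ]

def colex : MonomialOrder σ where
  syn := Colex (σ →₀ ℕ)
  toSyn := { toEquiv := toColex, map_add' := fun _ _ => rfl }
  toSyn_monotone := Finsupp.toColex_monotone

theorem colex_lt_iff {c d : σ →₀ ℕ} :
    c ≺[colex] d ↔ ∃ k, (∀ j, k < j → c j = d j) ∧ c k < d k :=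
  Iff.rfl

variable {R : Type*} [CommRing R] [IsDomain R] {i j : σ}

theorem colex_degree_X_lt_degree_X (hij : i < j) :
    colex.degree (X i : MvPolynomial σ R) ≺[colex] colex.degree (X j : MvPolynomial σ R) := by
  rw [degree_X, degree_X]
  exact Finsupp.Colex.single_lt_iff.2 hij

theorem colex_degree_X_sub_X (hij : i < j) :
    colex.degree (X i - X j : MvPolynomial σ R) = Finsupp.single j 1 := by
  rw [← neg_sub, degree_neg, degree_sub_of_lt (colex_degree_X_lt_degree_X hij), degree_X]

theorem colex_leadingCoeff_X_sub_X (hij : i < j) :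
    colex.leadingCoeff (X i - X j : MvPolynomial σ R) = -1 := by
  rw [← neg_sub, leadingCoeff_neg, leadingCoeff_sub_of_lt (colex_degree_X_lt_degree_X hij),
    leadingCoeff_X]

theorem colex_degree_of_X_sub_X_mul_eq (hij : i < j) {P g : MvPolynomial σ R} (hg : g ≠ 0)
    (h : (X i - X j) * P = X i * X j * g) :
    colex.degree P = Finsupp.single i 1 + colex.degree g := by
  have hXX : (X i * X j : MvPolynomial σ R) ≠ 0 := mul_ne_zero (X_ne_zero i) (X_ne_zero j)
  have hP : P ≠ 0 := by
    rintro rfl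
    exact mul_ne_zero hXX hg (h.symm.trans (mul_zero _))
  have hsub : (X i - X j : MvPolynomial σ R) ≠ 0 :=
    sub_ne_zero.2 fun h => hij.ne (X_injective h)
  have hdeg := congrArg colex.degree h
  rw [degree_mul hsub hP, degree_mul hXX hg, degree_mul (X_ne_zero i) (X_ne_zero j),
    colex_degree_X_sub_X hij, degree_X, degree_X, add_comm (Finsupp.single i 1), add_assoc] at hdeg
  exact add_left_cancel hdeg

theorem colex_leadingCoeff_of_X_sub_X_mul_eq (hij : i < j) {P g : MvPolynomial σ R}
    (h : (X i - X j) * P = X i * X j * g) :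
    colex.leadingCoeff P = -colex.leadingCoeff g := by
  have hlc := congrArg colex.leadingCoeff h
  rw [leadingCoeff_mul, leadingCoeff_mul, leadingCoeff_mul, colex_leadingCoeff_X_sub_X hij,
    leadingCoeff_X, leadingCoeff_X] at hlc
  linear_combination -hlc

end MonomialOrder

theorem MvPolynomial.coeff_rename_equiv {σ τ R : Type*} [CommSemiring R] (e : σ ≃ τ)
    (φ : MvPolynomial σ R) (d : τ →₀ ℕ) :
    (rename e φ).coeff d = φ.coeff (d.equivMapDomain e.symm) := by
  rw [← coeff_rename_mapDomain e e.injective, ← Finsupp.equivMapDomain_eq_mapDomain,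
    ← Finsupp.equivMapDomain_trans, Equiv.symm_trans_self, Finsupp.equivMapDomain_refl]

theorem Finsupp.equivMapDomain_swap_involutive {α M : Type*} [Zero M] [DecidableEq α]
    (a b : α) : Function.Involutive (equivMapDomain (M := M) (Equiv.swap a b)) := fun d => by
  rw [← equivMapDomain_trans, Equiv.swap_swap, equivMapDomain_refl]

theorem tailLt_iff_colex_lt {γ α : ℕ →₀ ℕ} : TailLt γ α ↔ γ ≺[colex] α :=
  ⟨fun ⟨k, hk, h⟩ => ⟨k, h, hk⟩, fun ⟨k, h, hk⟩ => ⟨k, hk, h⟩⟩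

section Swap

open Equiv Finsupp

variable {i : ℕ}

theorem swap_colex_lt_swap {γ α : ℕ →₀ ℕ} (h : γ ≺[colex] α) (hi : γ i ≤ α i) :
    γ.equivMapDomain (swap i (i + 1)) ≺[colex] α.equivMapDomain (swap i (i + 1)) := by
  obtain ⟨k, hagree, hk⟩ := colex_lt_iff.1 h
  simp only [colex_lt_iff, equivMapDomain_apply, symm_swap, swap_apply_def]
  rcases lt_trichotomy k i with hki | rfl | hik
  · refine ⟨k, fun j hj => ?_, ?_⟩
    · split_ifs <;> apply hagree <;> omega
    · rwa [if_neg hki.ne, if_neg (by omega)]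
  · refine ⟨k + 1, fun j hj => ?_, by simpa using hk⟩
    rw [if_neg (by omega), if_neg (by omega)]
    exact hagree j (by omega)
  · rcases (Nat.succ_le_of_lt hik).eq_or_lt with rfl | hik
    · rcases hi.eq_or_lt with hi | hi
      · refine ⟨i, fun j hj => ?_, by simpa using hk⟩
        split_ifs
        · omega
        · exact hi
        · exact hagree j (by omega)
      · refine ⟨i + 1, fun j hj => ?_, by simpa using hi⟩
        rw [if_neg (by omega), if_neg (by omega)]
        exact hagree j (by omega)
    · refine ⟨k, fun j hj => ?_, ?_⟩
      · rw [if_neg (by omega), if_neg (by omega)]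
        exact hagree j hj
      · rwa [if_neg (by omega), if_neg (by omega)]

theorem colex_lt_swap {α : ℕ →₀ ℕ} (h : α (i + 1) < α i) :
    α ≺[colex] α.equivMapDomain (swap i (i + 1)) := by
  refine colex_lt_iff.2 ⟨i + 1, fun j hj => ?_, by simpa using h⟩
  rw [equivMapDomain_apply, symm_swap, swap_apply_of_ne_of_ne (by omega) (by omega)]

variable {R : Type*} [CommRing R] {f : MvPolynomial ℕ R}

theorem colex_degree_rename_swap (hf : f ≠ 0)
    (hbound : ∀ γ, f.coeff γ ≠ 0 → γ i ≤ colex.degree f i) :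
    colex.degree (rename (swap i (i + 1)) f) =
      (colex.degree f).equivMapDomain (swap i (i + 1)) := by
  have hinv := equivMapDomain_swap_involutive (M := ℕ) i (i + 1)
  refine degree_eq_of_forall_lt _ ?_ fun e he hne => ?_
  · rwa [coeff_rename_equiv, symm_swap, hinv, coeff_degree_ne_zero_iff]
  · rw [coeff_rename_equiv, symm_swap] at he
    have hlt := swap_colex_lt_swap (lt_degree_of_ne _ he (hinv.eq_iff.not.2 hne)) (hbound _ he)
    rwa [hinv] at hlt

theorem colex_leadingCoeff_rename_swap (hf : f ≠ 0)
    (hbound : ∀ γ, f.coeff γ ≠ 0 → γ i ≤ colex.degree f i) :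
    colex.leadingCoeff (rename (swap i (i + 1)) f) = colex.leadingCoeff f := by
  rw [leadingCoeff, colex_degree_rename_swap hf hbound, coeff_rename_equiv, symm_swap,
    equivMapDomain_swap_involutive, leadingCoeff]

theorem colex_degree_lt_degree_rename_swap (hf : f ≠ 0)
    (hbound : ∀ γ, f.coeff γ ≠ 0 → γ i ≤ colex.degree f i)
    (hgt : colex.degree f (i + 1) < colex.degree f i) :
    colex.degree f ≺[colex] colex.degree (rename (swap i (i + 1)) f) := by
  rw [colex_degree_rename_swap hf hbound]
  exact colex_lt_swap hgt

theorem colex_degree_sub_rename_swap (hf : f ≠ 0)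
    (hbound : ∀ γ, f.coeff γ ≠ 0 → γ i ≤ colex.degree f i)
    (hgt : colex.degree f (i + 1) < colex.degree f i) :
    colex.degree (f - rename (swap i (i + 1)) f) =
      (colex.degree f).equivMapDomain (swap i (i + 1)) := by
  rw [← neg_sub, degree_neg,
    degree_sub_of_lt (colex_degree_lt_degree_rename_swap hf hbound hgt),
    colex_degree_rename_swap hf hbound]

theorem colex_leadingCoeff_sub_rename_swap (hf : f ≠ 0)
    (hbound : ∀ γ, f.coeff γ ≠ 0 → γ i ≤ colex.degree f i)
    (hgt : colex.degree f (i + 1) < colex.degree f i) :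
    colex.leadingCoeff (f - rename (swap i (i + 1)) f) = -colex.leadingCoeff f := by
  rw [← neg_sub, leadingCoeff_neg,
    leadingCoeff_sub_of_lt (colex_degree_lt_degree_rename_swap hf hbound hgt),
    colex_leadingCoeff_rename_swap hf hbound]

end Swap

/-- `P` is `π_i(x_{i+1} f) = x_i x_{i+1} (f - s_i f) / (x_i - x_{i+1})`. -/
theorem leading_monomial_pi_operator_general (f : MvPolynomial ℕ ℤ) (α : ℕ →₀ ℕ) (c : ℤ)
    (i : ℕ) (hc : c ≠ 0) (hcoeff : f.coeff α = c)
    (hlead : ∀ γ, f.coeff γ ≠ 0 → γ ≠ α → TailLt γ α)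
    (hgt : α (i + 1) < α i)
    (hbound : ∀ γ, f.coeff γ ≠ 0 → γ i ≤ α i) :
    ∀ P : MvPolynomial ℕ ℤ,
      (MvPolynomial.X i - MvPolynomial.X (i + 1)) * P =
        MvPolynomial.X i * MvPolynomial.X (i + 1) *
          (f - MvPolynomial.rename (Equiv.swap i (i + 1)) f) →
      P.coeff (Finsupp.equivMapDomain (Equiv.swap i (i + 1)) α + Finsupp.single i 1) = c ∧
      ∀ γ, P.coeff γ ≠ 0 →
        γ ≠ Finsupp.equivMapDomain (Equiv.swap i (i + 1)) α + Finsupp.single i 1 →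
        TailLt γ (Finsupp.equivMapDomain (Equiv.swap i (i + 1)) α + Finsupp.single i 1) := by
  intro P hP
  have hf : f ≠ 0 := ne_zero_iff.2 ⟨α, hcoeff ▸ hc⟩
  have hdeg : colex.degree f = α := degree_eq_of_forall_lt _ (hcoeff ▸ hc)
    fun γ hγ hne => tailLt_iff_colex_lt.1 (hlead γ hγ hne)
  subst hdeg
  have hlc : colex.leadingCoeff f = c := hcoeff
  have hg : f - rename (Equiv.swap i (i + 1)) f ≠ 0 := by
    rw [← leadingCoeff_ne_zero_iff, colex_leadingCoeff_sub_rename_swap hf hbound hgt, hlc]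
    exact neg_ne_zero.2 hc
  have hPdeg : colex.degree P = (colex.degree f).equivMapDomain (Equiv.swap i (i + 1)) +
      Finsupp.single i 1 := by
    rw [colex_degree_of_X_sub_X_mul_eq i.lt_succ_self hg hP,
      colex_degree_sub_rename_swap hf hbound hgt, add_comm]
  have hPlc : colex.leadingCoeff P = c := by
    rw [colex_leadingCoeff_of_X_sub_X_mul_eq i.lt_succ_self hP,
      colex_leadingCoeff_sub_rename_swap hf hbound hgt, neg_neg, hlc]
  rw [← hPdeg]
  exact ⟨hPlc, fun γ hγ hne => tailLt_iff_colex_lt.2 (lt_degree_of_ne _ hγ hne)⟩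

/-- if `f` has leading monomial `x^α` (tail lex) with coefficient
`c`, `α_i > α_{i+1}`, and all monomials of `f` have `x_i`-power at most `α_i`,
then `π_i(x_{i+1} f)` has leading monomial `x_i x^{s_i α}` with coefficient `c`.
Here `π_i(x_{i+1} f)` is characterized as the polynomial `P` with
`(x_i - x_{i+1}) P = x_i x_{i+1} (f - s_i f)`. -/
theorem leading_monomial_pi_operator (f : MvPolynomial ℕ ℤ) (α : ℕ →₀ ℕ) (c : ℤ)
    (i : ℕ) (hf : f ≠ 0) (hc : c ≠ 0) (hcoeff : f.coeff α = c)
    (hlead : ∀ γ, f.coeff γ ≠ 0 → γ ≠ α → TailLt γ α)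
    (hgt : α (i + 1) < α i)
    (hbound : ∀ γ, f.coeff γ ≠ 0 → γ i ≤ α i) :
    ∀ P : MvPolynomial ℕ ℤ,
      (MvPolynomial.X i - MvPolynomial.X (i + 1)) * P =
        MvPolynomial.X i * MvPolynomial.X (i + 1) *
          (f - MvPolynomial.rename (Equiv.swap i (i + 1)) f) →
      P.coeff (Finsupp.equivMapDomain (Equiv.swap i (i + 1)) α + Finsupp.single i 1) = c ∧
      ∀ γ, P.coeff γ ≠ 0 →
        γ ≠ Finsupp.equivMapDomain (Equiv.swap i (i + 1)) α + Finsupp.single i 1 →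
        TailLt γ (Finsupp.equivMapDomain (Equiv.swap i (i + 1)) α + Finsupp.single i 1) :=
  leading_monomial_pi_operator_general f α c i hc hcoeff hlead hgt hbound

end
end
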